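/- arXiv:1411.2729 — 3 statements merged into one kernel-verified Lean document; each statement's English description precedes it below -/
import Mathlib

section
/- Let P be a finite group and r a unit in the p-adic integers Z_p. Then the sum over all subgroups P' of P of μ(P')·r^{[P:P']} is congruent to 0 modulo |P|·Z_p, where μ is the Möbius function of the subgroup lattice of P (defined by μ(1)=1 and Σ_{P'⊆P} μ(P') = 0 for nontrivial P). -/
open MulAction

section Translation

variable {P : Type*} [Group P] {n : ℕ}

/-- Translation action of a group on functions out of itself. -/
instance tAct : MulAction P (P → Fin n) where
  smul g f := fun x => f (g⁻¹ * x)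
  one_smul f := by funext x; show f (1⁻¹ * x) = f x; rw [inv_one, one_mul]
  mul_smul g h f := by
    funext x
    show f ((g * h)⁻¹ * x) = f (h⁻¹ * (g⁻¹ * x))
    rw [mul_inv_rev, mul_assoc]

lemma tAct_smul_apply (g : P) (f : P → Fin n) (x : P) : (g • f) x = f (g⁻¹ * x) := rfl

/-- Functions fixed (under translation) by a subgroup `H` correspond to functions on the
right coset space of `H`. -/
noncomputable def fixEquiv (H : Subgroup P) :
    {f : P → Fin n // H ≤ stabilizer P f} ≃ (Quotient (QuotientGroup.rightRel H) → Fin n) where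
  toFun f := Quotient.lift f.1 (by
    intro a b hab
    have hm : b * a⁻¹ ∈ H := (QuotientGroup.rightRel_apply).mp hab
    have key := congrFun (mem_stabilizer_iff.mp (f.2 hm)) b
    rw [tAct_smul_apply] at key
    have harg : (b * a⁻¹)⁻¹ * b = a := by group
    rw [harg] at key
    exact key)
  invFun g := ⟨fun x => g (Quotient.mk (QuotientGroup.rightRel H) x), by
    intro h hh
    rw [mem_stabilizer_iff]
    funext x
    rw [tAct_smul_apply]
    show g (Quotient.mk _ (h⁻¹ * x)) = g (Quotient.mk _ x)
    congr 1
    refine Quot.sound ?_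
    refine (QuotientGroup.rightRel_apply).mpr ?_
    have : x * (h⁻¹ * x)⁻¹ = h := by group
    rw [this]; exact hh⟩
  left_inv f := Subtype.ext rfl
  right_inv g := funext fun q => Quotient.inductionOn q fun x => rfl

lemma card_fix [Finite P] (H : Subgroup P) :
    Nat.card {f : P → Fin n // H ≤ stabilizer P f} = n ^ H.index := by
  rw [Nat.card_congr (fixEquiv H), Nat.card_fun, Nat.card_eq_fintype_card (α := Fin n),
    Fintype.card_fin]
  congr 1
  rw [Nat.card_congr (QuotientGroup.quotientRightRelEquivQuotientLeftRel H)]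
  rfl

end Translation

/-- For a finite free-part: the number of points with trivial stabilizer is divisible
by the order of the group. -/
theorem free_part_dvd (G α : Type*) [Group G] [MulAction G α] [Finite G] [Finite α] :
    Nat.card G ∣ Nat.card {a : α // MulAction.stabilizer G a = ⊥} := by
  classical
  let Y : SubMulAction G α :=
    { carrier := {a | MulAction.stabilizer G a = ⊥}
      smul_mem' := by
        intro g a ha
        simp only [Set.mem_setOf_eq] at ha ⊢
        rw [MulAction.stabilizer_smul_eq_stabilizer_map_conj, ha, Subgroup.map_bot] }
  have hYmem : ∀ a : α, a ∈ Y ↔ MulAction.stabilizer G a = ⊥ := fun a => Iff.rfl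
  have hcongr : Nat.card {a : α // MulAction.stabilizer G a = ⊥} = Nat.card Y :=
    Nat.card_congr (Equiv.subtypeEquivRight fun a => (hYmem a).symm)
  rw [hcongr]
  have hY : ∀ y : Y, MulAction.stabilizer G y = ⊥ := by
    intro y
    have h2 : MulAction.stabilizer G (y : α) = ⊥ := y.2
    ext g
    simp only [Subgroup.mem_bot, MulAction.mem_stabilizer_iff]
    constructor
    · intro hg
      have hco : g • (y : α) = (y : α) := by
        have := congrArg Subtype.val hg
        rwa [SubMulAction.val_smul] at this
      have : g ∈ MulAction.stabilizer G (y : α) := MulAction.mem_stabilizer_iff.mpr hco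
      rw [h2, Subgroup.mem_bot] at this
      exact this
    · rintro rfl; exact one_smul _ _
  have e := MulAction.selfEquivSigmaOrbits' G Y
  letI : ∀ ω : MulAction.orbitRel.Quotient G Y, Fintype ω.orbit := fun ω => Fintype.ofFinite _
  letI : Fintype (MulAction.orbitRel.Quotient G Y) := Fintype.ofFinite _
  have horb : ∀ ω : MulAction.orbitRel.Quotient G Y, Nat.card ω.orbit = Nat.card G := by
    intro ω
    rw [MulAction.orbitRel.Quotient.orbit_eq_orbit_out ω Quotient.out_eq']
    have h3 := MulAction.index_stabilizer G (Quotient.out ω)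
    rw [hY _, Subgroup.index_bot] at h3
    rw [← Nat.card_coe_set_eq] at h3
    exact h3.symm
  have hcard : Nat.card Y = Nat.card (MulAction.orbitRel.Quotient G Y) * Nat.card G := by
    rw [Nat.card_congr e, Nat.card_eq_fintype_card, Fintype.card_sigma]
    have hω : ∀ ω : MulAction.orbitRel.Quotient G Y, Fintype.card ω.orbit = Nat.card G :=
      fun ω => by rw [← Nat.card_eq_fintype_card]; exact horb ω
    simp only [hω, Finset.sum_const, smul_eq_mul, Finset.card_univ, ← Nat.card_eq_fintype_card]
  exact ⟨_, by rw [hcard, mul_comm]⟩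

/-- Key integral congruence: for any natural `n`,
`|P|` divides `∑_{H ≤ P} μ(H) n^{[P:H]}` in `ℤ`. -/
theorem keyA {P : Type*} [Group P] [Finite P] (μ : Subgroup P → ℤ)
    (hμ_bot : μ ⊥ = 1)
    (hμ_rec : ∀ Q : Subgroup P, Q ≠ ⊥ → ∑ᶠ (P' : Subgroup P) (_ : P' ≤ Q), μ P' = 0)
    (n : ℕ) :
    (Nat.card P : ℤ) ∣ ∑ᶠ H : Subgroup P, μ H * (n : ℤ) ^ H.index := by
  classical
  letI : Fintype P := Fintype.ofFinite P
  letI : Fintype (Subgroup P) := Fintype.ofFinite _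
  rw [finsum_eq_sum_of_fintype]
  have hμ : ∀ Q : Subgroup P,
      ∑ H ∈ Finset.univ.filter (· ≤ Q), μ H = if Q = ⊥ then 1 else 0 := by
    intro Q
    by_cases hQ : Q = ⊥
    · subst hQ
      rw [if_pos rfl]
      have hfil : Finset.univ.filter (fun H : Subgroup P => H ≤ ⊥) = {⊥} := by
        ext H; simp [le_bot_iff]
      rw [hfil, Finset.sum_singleton, hμ_bot]
    · rw [if_neg hQ, ← hμ_rec Q hQ]
      exact (finsum_cond_eq_sum_of_cond_iff μ (fun {H} _ => by simp)).symm
  have hcard : ∀ H : Subgroup P, ((n : ℤ)) ^ H.index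
      = ∑ f : P → Fin n, if H ≤ MulAction.stabilizer P f then (1 : ℤ) else 0 := by
    intro H
    calc ((n : ℤ)) ^ H.index = ((n ^ H.index : ℕ) : ℤ) := by push_cast; ring
      _ = (Nat.card {f : P → Fin n // H ≤ MulAction.stabilizer P f} : ℤ) := by
          rw [card_fix H]
      _ = ∑ f : P → Fin n, if H ≤ MulAction.stabilizer P f then (1 : ℤ) else 0 := by
          rw [Nat.card_eq_fintype_card, Fintype.card_subtype, ← Finset.sum_boole]
  have hmain : ∑ H : Subgroup P, μ H * (n : ℤ) ^ H.index
      = (Nat.card {f : P → Fin n // MulAction.stabilizer P f = ⊥} : ℤ) := by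
    calc ∑ H : Subgroup P, μ H * (n : ℤ) ^ H.index
        = ∑ H : Subgroup P, ∑ f : P → Fin n,
            μ H * (if H ≤ MulAction.stabilizer P f then (1 : ℤ) else 0) := by
          refine Finset.sum_congr rfl fun H _ => ?_
          rw [hcard H, Finset.mul_sum]
      _ = ∑ f : P → Fin n, ∑ H : Subgroup P,
            μ H * (if H ≤ MulAction.stabilizer P f then (1 : ℤ) else 0) := Finset.sum_comm
      _ = ∑ f : P → Fin n, if MulAction.stabilizer P f = ⊥ then (1 : ℤ) else 0 := by
          refine Finset.sum_congr rfl fun f _ => ?_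
          rw [← hμ (MulAction.stabilizer P f), Finset.sum_filter]
          refine Finset.sum_congr rfl fun H _ => ?_
          rw [mul_ite, mul_one, mul_zero]
      _ = ((Finset.univ.filter
            (fun f : P → Fin n => MulAction.stabilizer P f = ⊥)).card : ℤ) := by
          rw [Finset.sum_boole]
      _ = (Nat.card {f : P → Fin n // MulAction.stabilizer P f = ⊥} : ℤ) := by
          rw [Nat.card_eq_fintype_card, Fintype.card_subtype]
  rw [hmain]
  exact_mod_cast Int.natCast_dvd_natCast.mpr (free_part_dvd P (P → Fin n))

/-- Möbius–Wall congruence: for a finite group `P`, a unit `r` of `ℤ_p`, and the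
Möbius function `μ` of the subgroup lattice of `P` (characterised by `μ ⊥ = 1` and
`∑_{P' ≤ Q} μ P' = 0` for every nontrivial subgroup `Q`), the sum
`∑_{P' ≤ P} μ(P') r^[P:P']` is divisible by `|P|` in `ℤ_p`. -/
theorem stmt0 (p : ℕ) [Fact p.Prime] (P : Type*) [Group P] [Finite P]
    (μ : Subgroup P → ℤ)
    (hμ_bot : μ ⊥ = 1)
    (hμ_rec : ∀ Q : Subgroup P, Q ≠ ⊥ → ∑ᶠ (P' : Subgroup P) (_ : P' ≤ Q), μ P' = 0)
    (r : ℤ_[p]ˣ) :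
    ((Nat.card P : ℤ_[p])) ∣
      ∑ᶠ P' : Subgroup P, (μ P' : ℤ_[p]) * (r : ℤ_[p]) ^ P'.index := by
  classical
  letI : Fintype (Subgroup P) := Fintype.ofFinite _
  rw [finsum_eq_sum_of_fintype]
  -- the integral congruence, cast into `ℤ_[p]`
  have key : ∀ n : ℕ, (Nat.card P : ℤ_[p]) ∣
      ∑ H : Subgroup P, (μ H : ℤ_[p]) * (n : ℤ_[p]) ^ H.index := by
    intro n
    have h := keyA μ hμ_bot hμ_rec n
    rw [finsum_eq_sum_of_fintype] at h
    have h2 := map_dvd (Int.castRingHom ℤ_[p]) h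
    simp only [map_natCast, map_sum, map_mul, map_pow, Int.coe_castRingHom,
      Int.cast_natCast] at h2
    exact h2
  -- split `|P|` into its `p`-part and its prime-to-`p` part
  set N := Nat.card P with hNdef
  have hN0 : N ≠ 0 := Nat.card_pos.ne'
  set a := N.factorization p with hadef
  have hN : p ^ a * (N / p ^ a) = N := Nat.ordProj_mul_ordCompl_eq_self N p
  have hm : ¬ p ∣ N / p ^ a := Nat.not_dvd_ordCompl (Fact.out : p.Prime) hN0
  have hmu : IsUnit ((N / p ^ a : ℕ) : ℤ_[p]) := by
    by_contra h
    rw [PadicInt.not_isUnit_iff] at h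
    have : (p : ℤ) ∣ ((N / p ^ a : ℕ) : ℤ) := by
      rw [← PadicInt.norm_int_lt_one_iff_dvd]
      exact_mod_cast h
    exact hm (by exact_mod_cast this)
  rw [← hN]
  push_cast
  rw [hmu.mul_right_dvd]
  -- approximate `r` by a natural number mod `p^a`
  set n := PadicInt.appr (r : ℤ_[p]) a with hn
  have happr : (p : ℤ_[p]) ^ a ∣ ((r : ℤ_[p]) - n) := by
    have := PadicInt.appr_spec a (r : ℤ_[p])
    rwa [Ideal.mem_span_singleton] at this
  have hdiff : (p : ℤ_[p]) ^ a ∣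
      (∑ H : Subgroup P, (μ H : ℤ_[p]) * (r : ℤ_[p]) ^ H.index)
        - ∑ H : Subgroup P, (μ H : ℤ_[p]) * (n : ℤ_[p]) ^ H.index := by
    rw [← Finset.sum_sub_distrib]
    refine Finset.dvd_sum fun H _ => ?_
    rw [← mul_sub]
    exact Dvd.dvd.mul_left (happr.trans (sub_dvd_pow_sub_pow _ _ _)) _
  have hpa : (p : ℤ_[p]) ^ a ∣ ∑ H : Subgroup P, (μ H : ℤ_[p]) * (n : ℤ_[p]) ^ H.index := by
    refine dvd_trans ?_ (key n)
    have hdvd : (p : ℕ) ^ a ∣ N := Nat.ordProj_dvd N p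
    exact_mod_cast Nat.cast_dvd_cast (α := ℤ_[p]) hdvd
  have := dvd_add hdiff hpa
  rwa [sub_add_cancel] at this
end

section
/- Let p be a prime, P a finite group with |P| = p^k·t, gcd(p,t)=1, and t' a divisor of t. Then the sum of μ(P') over all subgroups P' of P whose order is divisible by t' and divides p^k·t' is divisible by p^k. -/
/-!
By P. Hall's theorem, the sum of `μ` over the subgroups of order dividing `n` is the signed count
of chains of nontrivial such subgroups. For `n = p^k d`, a group `S` of conjugations of order `p^k`
permutes these chains, and weighted Burnside shows that `|S|` divides the sum over `s ∈ S` of the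
signed chain counts of the `s`-invariant subposets. For `s ≠ 1` that subposet is contractible by
Quillen's cone `H ≤ H⟨s⟩ ≥ ⟨s⟩`, so only `s = 1` contributes and `p^k` divides
`∑_{|H| ∣ p^k d} μ(H)` for every `d`. Grouping subgroups by the `p'`-part of their order, Möbius
inversion over the divisors of `t` gives the theorem.
-/

open Finset
open scoped Classical Pointwise

section Chains

variable {α : Type*} [PartialOrder α]

noncomputable def chains (A : Finset α) : Finset (Finset α) :=
  A.powerset.filter fun σ => IsChain (· ≤ ·) (σ : Set α)

/-- Minus the reduced Euler characteristic of the order complex of `A` (the empty chain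
included). -/
noncomputable def signedChainCount (A : Finset α) : ℤ :=
  ∑ σ ∈ chains A, (-1) ^ σ.card

@[simp]
lemma mem_chains {A σ : Finset α} :
    σ ∈ chains A ↔ σ ⊆ A ∧ IsChain (· ≤ ·) (σ : Set α) := by
  simp [chains]

lemma chains_empty : chains (∅ : Finset α) = {∅} := by
  ext σ
  simp only [mem_chains, subset_empty, mem_singleton, and_iff_left_iff_imp]
  rintro rfl
  simp [IsChain.empty]

lemma signedChainCount_empty : signedChainCount (∅ : Finset α) = 1 := by
  simp [signedChainCount, chains_empty]

/-- The chains through `x` are `insert x τ` for the chains `τ` strictly below `x`. -/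
lemma signedChainCount_eq_sub_of_maximal {A : Finset α} {x : α} (hx : x ∈ A)
    (hmax : ∀ y ∈ A, ¬ x < y) :
    signedChainCount A =
      signedChainCount (A.erase x) - signedChainCount (A.filter (· < x)) := by
  have hx_notMem : ∀ τ ∈ chains (A.filter (· < x)), x ∉ τ := fun τ hτ hxτ =>
    lt_irrefl x (mem_filter.1 ((mem_chains.1 hτ).1 hxτ)).2
  have h_avoid : (chains A).filter (x ∉ ·) = chains (A.erase x) := by
    ext σ
    simp only [mem_filter, mem_chains, subset_erase]
    tauto
  have h_through : (chains A).filter (x ∈ ·) = (chains (A.filter (· < x))).image (insert x) := by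
    ext σ
    simp only [mem_filter, mem_chains, mem_image]
    constructor
    · rintro ⟨⟨hσA, hσ⟩, hxσ⟩
      refine ⟨σ.erase x, ⟨fun y hy => ?_, hσ.mono (by simp)⟩, insert_erase hxσ⟩
      obtain ⟨hyx, hyσ⟩ := mem_erase.1 hy
      refine mem_filter.2 ⟨hσA hyσ, ?_⟩
      rcases hσ.total hyσ hxσ with h | h
      · exact lt_of_le_of_ne h hyx
      · exact absurd (lt_of_le_of_ne h (Ne.symm hyx)) (hmax y (hσA hyσ))
    · rintro ⟨τ, ⟨hτA, hτ⟩, rfl⟩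
      refine ⟨⟨insert_subset hx fun y hy => (mem_filter.1 (hτA hy)).1, ?_⟩, mem_insert_self _ _⟩
      rw [coe_insert]
      exact hτ.insert fun y hy _ => Or.inr (mem_filter.1 (hτA hy)).2.le
  have h_inj : Set.InjOn (insert x) (chains (A.filter (· < x)) : Set (Finset α)) :=
    fun τ hτ τ' hτ' h => by
      rw [← erase_insert (hx_notMem τ hτ), h, erase_insert (hx_notMem τ' hτ')]
  rw [signedChainCount, ← sum_filter_not_add_sum_filter _ (x ∈ ·), h_avoid, h_through,
    sum_image h_inj, signedChainCount, signedChainCount, sub_eq_add_neg, ← sum_neg_distrib]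
  congr 1
  refine sum_congr rfl fun τ hτ => ?_
  rw [card_insert_of_notMem (hx_notMem τ hτ), pow_succ]
  ring

/-- Toggling `e σ` in `σ` is a sign-reversing involution on chains. -/
lemma signedChainCount_eq_zero_of_toggle {A : Finset α} (e : Finset α → α)
    (he_mem : ∀ σ ∈ chains A, e σ ∈ A)
    (he_comparable : ∀ σ ∈ chains A, ∀ x ∈ σ, x ≤ e σ ∨ e σ ≤ x)
    (he_erase : ∀ σ ∈ chains A, e (σ.erase (e σ)) = e σ)
    (he_insert : ∀ σ ∈ chains A, e (insert (e σ) σ) = e σ) :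
    signedChainCount A = 0 := by
  let toggle (σ : Finset α) : Finset α := if e σ ∈ σ then σ.erase (e σ) else insert (e σ) σ
  refine sum_involution (fun σ _ => toggle σ) (fun σ _ => ?_) (fun σ _ _ => ?_)
    (fun σ hσ => ?_) (fun σ hσ => ?_)
  · by_cases h : e σ ∈ σ
    · rw [show toggle σ = σ.erase (e σ) from if_pos h, ← card_erase_add_one h, pow_succ]; ring
    · rw [show toggle σ = insert (e σ) σ from if_neg h, card_insert_of_notMem h, pow_succ]; ring
  · by_cases h : e σ ∈ σ <;> simp [toggle, h]
  · obtain ⟨hσA, hσc⟩ := mem_chains.1 hσ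
    by_cases h : e σ ∈ σ
    · simp only [toggle, if_pos h, mem_chains]
      exact ⟨(erase_subset _ _).trans hσA, hσc.mono (by simp)⟩
    · simp only [toggle, if_neg h, mem_chains, coe_insert]
      exact ⟨insert_subset (he_mem σ hσ) hσA,
        hσc.insert fun x hx _ => (he_comparable σ hσ x hx).symm⟩
  · by_cases h : e σ ∈ σ
    · simp [toggle, h, he_erase σ hσ, insert_erase h]
    · simp [toggle, h, he_insert σ hσ, erase_insert h]

end Chains

section Cone

variable {α : Type*} [SemilatticeSup α] [OrderBot α]

lemma IsChain.finset_sup_mem {σ : Finset α} (hσ : IsChain (· ≤ ·) (σ : Set α))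
    (hne : σ.Nonempty) : σ.sup id ∈ σ := by
  rw [← sup'_eq_sup hne]
  refine sup'_mem (σ : Set α) (fun x hx y hy => ?_) _ hne id fun _ => id
  rcases hσ.total hx hy with h | h
  · rwa [sup_eq_right.2 h]
  · rwa [sup_eq_left.2 h]

/-- Quillen's conical contraction `y ≤ y ⊔ z ≥ z`: the cone point of a chain `σ` is `z` joined
with the largest element of `σ` not above `z`. -/
lemma signedChainCount_eq_zero_of_sup_mem {A : Finset α} {z : α} (hz : z ∈ A)
    (hsup : ∀ y ∈ A, y ⊔ z ∈ A) : signedChainCount A = 0 := by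
  let below (σ : Finset α) : Finset α := σ.filter fun y => ¬ z ≤ y
  have hz_le (σ : Finset α) : z ≤ (below σ).sup id ⊔ z := le_sup_right
  refine signedChainCount_eq_zero_of_toggle (fun σ => (below σ).sup id ⊔ z)
    (fun σ hσ => ?_) (fun σ hσ x hx => ?_) (fun σ _ => ?_) (fun σ _ => ?_)
  · obtain ⟨hσA, hσc⟩ := mem_chains.1 hσ
    rcases (below σ).eq_empty_or_nonempty with h | h
    · simpa [h] using hz
    · exact hsup _ (hσA (filter_subset _ σ
        ((hσc.mono (coe_subset.2 (filter_subset _ σ))).finset_sup_mem h)))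
  · by_cases hzx : z ≤ x
    · refine Or.inr (sup_le (Finset.sup_le fun y hy => ?_) hzx)
      obtain ⟨hyσ, hzy⟩ := mem_filter.1 hy
      rcases (mem_chains.1 hσ).2.total hyσ hx with h | h
      · exact h
      · exact absurd (hzx.trans h) hzy
    · exact Or.inl (le_sup_of_le_left (le_sup (f := id) (mem_filter.2 ⟨hx, hzx⟩)))
  · simp only [below, filter_erase, hz_le, not_true_eq_false, not_false_eq_true,
      erase_eq_of_notMem, mem_filter, and_false]
  · simp only [below, filter_insert, hz_le, not_true_eq_false, if_false]

end Cone

section Hall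

variable {α : Type*} [PartialOrder α] [OrderBot α] [Fintype α]

/-- P. Hall's theorem, for the Möbius function `μ(⊥, ·)`. -/
theorem sum_eq_signedChainCount_erase_bot (μ : α → ℤ) (hbot : μ ⊥ = 1)
    (hrec : ∀ q ≠ ⊥, ∑ x ∈ univ.filter (· ≤ q), μ x = 0)
    (D : Finset α) (hD : IsLowerSet (D : Set α)) (hbotD : ⊥ ∈ D) :
    ∑ x ∈ D, μ x = signedChainCount (D.erase ⊥) := by
  induction D using Finset.strongInduction with
  | H D ih =>
  rcases (D.erase ⊥).eq_empty_or_nonempty with hD₀ | hne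
  · rw [← add_sum_erase _ _ hbotD, hD₀, sum_empty, hbot, signedChainCount_empty, add_zero]
  obtain ⟨x, hx⟩ := exists_maximal hne
  obtain ⟨hx_ne, hxD⟩ := mem_erase.1 hx.1
  have hmax : ∀ y ∈ D, ¬ x < y := fun y hy hxy =>
    hxy.not_ge (hx.2 (mem_erase.2 ⟨(bot_le.trans_lt hxy).ne', hy⟩) hxy.le)
  set below := univ.filter (· < x)
  have hμx : μ x = -∑ y ∈ below, μ y := by
    have h := hrec x hx_ne
    rwa [show univ.filter (· ≤ x) = insert x below by ext; simp [below, le_iff_lt_or_eq, or_comm],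
      sum_insert (by simp [below]), add_eq_zero_iff_eq_neg] at h
  have h_below : ∑ y ∈ below, μ y = signedChainCount (below.erase ⊥) := by
    have h_sub : below ⊆ D := fun y hy => hD (mem_filter.1 hy).2.le hxD
    refine ih below ((ssubset_iff_of_subset h_sub).2 ⟨x, hxD, by simp [below]⟩) ?_
      (by simpa [below, bot_lt_iff_ne_bot])
    simpa [below, Set.Iio] using isLowerSet_Iio x
  have h_erase : ∑ y ∈ D.erase x, μ y = signedChainCount ((D.erase x).erase ⊥) := by
    refine ih _ (erase_ssubset hxD) ?_ (mem_erase.2 ⟨hx_ne.symm, hbotD⟩)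
    rw [coe_erase]
    exact hD.erase fun b hb hxb => (eq_or_lt_of_le hxb).resolve_right (hmax b hb) |>.symm
  have h_filter : (D.erase ⊥).filter (· < x) = below.erase ⊥ := by
    ext y
    simp only [mem_filter, mem_erase, mem_univ, true_and, below]
    exact ⟨fun h => ⟨h.1.1, h.2⟩, fun h => ⟨⟨h.1, hD h.2.le hxD⟩, h.2⟩⟩
  rw [← add_sum_erase _ _ hxD, hμx, h_below, h_erase,
    signedChainCount_eq_sub_of_maximal hx.1 fun y hy => hmax y (mem_of_mem_erase hy),
    erase_right_comm, h_filter]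
  ring

end Hall

namespace Nat

variable {p k t n : ℕ}

lemma dvd_pow_mul_iff_ordCompl_dvd (hp : p.Prime) (hcop : Coprime p t) (hn₀ : n ≠ 0)
    (hn : n ∣ p ^ k * t) {m : ℕ} : n ∣ p ^ k * m ↔ ordCompl[p] n ∣ m := by
  constructor
  · intro h
    exact ((coprime_ordCompl hp hn₀).pow_left k).symm.dvd_of_dvd_mul_left
      ((ordCompl_dvd n p).trans h)
  · intro h
    have h_proj : p ^ n.factorization p ∣ p ^ k :=
      (hcop.pow_left _).dvd_of_dvd_mul_right ((ordProj_dvd n p).trans hn)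
    rw [← ordProj_mul_ordCompl_eq_self n p]
    exact mul_dvd_mul h_proj h

lemma dvd_and_dvd_pow_mul_iff_ordCompl_eq (hp : p.Prime) (hcop : Coprime p t) (hn₀ : n ≠ 0)
    (hn : n ∣ p ^ k * t) {e : ℕ} (he : Coprime p e) :
    e ∣ n ∧ n ∣ p ^ k * e ↔ ordCompl[p] n = e := by
  constructor
  · rintro ⟨hen, hne⟩
    refine dvd_antisymm ((dvd_pow_mul_iff_ordCompl_dvd hp hcop hn₀ hn).1 hne) ?_
    rw [← ordProj_mul_ordCompl_eq_self n p] at hen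
    exact ((he.pow_left _).symm).dvd_of_dvd_mul_left hen
  · rintro rfl
    exact ⟨ordCompl_dvd n p, (dvd_pow_mul_iff_ordCompl_dvd hp hcop hn₀ hn).2 dvd_rfl⟩

lemma dvd_of_forall_dvd_sum_divisors {R : Type*} [CommRing R] {a : R} {f : ℕ → R}
    (ht : t ≠ 0) (h : ∀ m, m ∣ t → a ∣ ∑ e ∈ m.divisors, f e) {m : ℕ} (hm : m ∣ t) : a ∣ f m := by
  induction m using Nat.strong_induction_on with
  | _ m ih =>
  have hm₀ : m ≠ 0 := ne_zero_of_dvd_ne_zero ht hm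
  have h_proper : a ∣ ∑ e ∈ m.properDivisors, f e := dvd_sum fun e he =>
    ih e (mem_properDivisors.1 he).2 ((mem_properDivisors.1 he).1.trans hm)
  have h_all := h m hm
  rw [← cons_self_properDivisors hm₀, sum_cons] at h_all
  exact (dvd_add_left h_proper).1 h_all

end Nat

namespace Subgroup

variable {G : Type*} [Group G]

lemma card_sup_dvd_mul_of_le_normalizer {y z : Subgroup G} (h : z ≤ normalizer (y : Set G)) :
    Nat.card ↥(z ⊔ y) ∣ Nat.card y * Nat.card z := by
  have := normal_subgroupOf_sup_of_le_normalizer h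
  have h_top : z.subgroupOf (z ⊔ y) ⊔ y.subgroupOf (z ⊔ y) = ⊤ := by
    rw [← subgroupOf_sup le_sup_left le_sup_right, subgroupOf_self]
  have h_index : y.relIndex (z ⊔ y) = y.relIndex z := by
    rw [relIndex, ← relIndex_top_right, ← h_top, relIndex_sup_right,
      relIndex_subgroupOf le_sup_left]
  rw [← relIndex_bot_left, ← relIndex_mul_relIndex ⊥ y _ bot_le le_sup_right, h_index,
    relIndex_bot_left]
  exact mul_dvd_mul_left _ (relIndex_dvd_card y z)

end Subgroup

namespace MulAction

variable {M X : Type*} [Group M] [Fintype M] [Fintype X] [MulAction M X]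

/-- Weighted Burnside: the fixed-point sums of an invariant weight add up to `|M|` times its sum
over orbit representatives. -/
theorem card_dvd_sum_sum_fixed (F : X → ℤ) (hF : ∀ (g : M) (x : X), F (g • x) = F x) :
    (Nat.card M : ℤ) ∣ ∑ g : M, ∑ x ∈ univ.filter (fun x => g • x = x), F x := by
  have h_sigma : ∑ g : M, ∑ x ∈ univ.filter (fun x => g • x = x), F x =
      ∑ a : Σ g : M, fixedBy X g, F a.2 := by
    rw [Fintype.sum_sigma]
    exact sum_congr rfl fun g _ => sum_subtype _ (by simp [mem_fixedBy]) F
  -- the orbit component of Burnside's bijection is the orbit of `a.2`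
  have h_out (a : Σ g : M, fixedBy X g) :
      F a.2 = F (sigmaFixedByEquivOrbitsProdGroup M X a).1.out := by
    obtain ⟨g, hg⟩ := (orbitRel_apply.1 (Quotient.mk_out (s := orbitRel M X) (a.2 : X)))
    exact hg ▸ (hF g _).symm
  rw [h_sigma, Fintype.sum_equiv (sigmaFixedByEquivOrbitsProdGroup M X) _ (fun b => F b.1.out) h_out,
    Fintype.sum_prod_type]
  simp only [sum_const, card_univ, nsmul_eq_mul, Nat.card_eq_fintype_card]
  exact dvd_sum fun _ _ => dvd_mul_right _ _

end MulAction

section Conjugation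

variable {G : Type*} [Group G]

lemma Subgroup.card_conjAct_smul (c : ConjAct G) (H : Subgroup G) :
    Nat.card ↥(c • H) = Nat.card H :=
  (Nat.card_congr (H.equivSMul c).toEquiv).symm

/-- Comparable conjugate subgroups have the same order, hence are equal. -/
lemma smul_finset_eq_self_iff_of_isChain [Finite G] {c : ConjAct G} {σ : Finset (Subgroup G)}
    (hσ : IsChain (· ≤ ·) (σ : Set (Subgroup G))) : c • σ = σ ↔ ∀ H ∈ σ, c • H = H := by
  constructor
  · intro h H hH
    have hcH : c • H ∈ σ := h ▸ smul_mem_smul_finset hH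
    rcases hσ.total hcH hH with hle | hle
    · exact Subgroup.eq_of_le_of_card_ge hle (Subgroup.card_conjAct_smul c H).ge
    · exact (Subgroup.eq_of_le_of_card_ge hle (Subgroup.card_conjAct_smul c H).le).symm
  · intro h
    ext K
    simp only [mem_smul_finset]
    exact ⟨fun ⟨H, hH, hHK⟩ => (h H hH).symm.trans hHK ▸ hH, fun hK => ⟨K, hK, h K hK⟩⟩

lemma filter_chains_smul_eq_self [Finite G] (c : ConjAct G) (A : Finset (Subgroup G)) :
    (chains A).filter (fun σ => c • σ = σ) = chains (A.filter fun H => c • H = H) := by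
  ext σ
  simp only [mem_filter, mem_chains, subset_iff]
  constructor
  · rintro ⟨⟨hσA, hσ⟩, hfix⟩
    exact ⟨fun H hH => ⟨hσA hH, (smul_finset_eq_self_iff_of_isChain hσ).1 hfix H hH⟩, hσ⟩
  · rintro ⟨hσA, hσ⟩
    exact ⟨⟨fun H hH => (hσA hH).1, hσ⟩,
      (smul_finset_eq_self_iff_of_isChain hσ).2 fun H hH => (hσA hH).2⟩

lemma smul_mem_chains {A : Finset (Subgroup G)} (hA : ∀ (c : ConjAct G), ∀ H ∈ A, c • H ∈ A)
    (c : ConjAct G) {σ : Finset (Subgroup G)} (hσ : σ ∈ chains A) : c • σ ∈ chains A := by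
  obtain ⟨hσA, hσc⟩ := mem_chains.1 hσ
  refine mem_chains.2 ⟨fun K hK => ?_, ?_⟩
  · obtain ⟨H, hH, rfl⟩ := mem_smul_finset.1 hK
    exact hA c H (hσA hH)
  · rw [coe_smul_finset]
    rintro _ ⟨H, hH, rfl⟩ _ ⟨K, hK, rfl⟩ hne
    simp only [Subgroup.pointwise_smul_le_pointwise_smul_iff]
    exact hσc hH hK fun h => hne (h ▸ rfl)

lemma smul_mem_chains_iff {A : Finset (Subgroup G)}
    (hA : ∀ (c : ConjAct G), ∀ H ∈ A, c • H ∈ A) (c : ConjAct G) {σ : Finset (Subgroup G)} :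
    c • σ ∈ chains A ↔ σ ∈ chains A :=
  ⟨fun h => by simpa using smul_mem_chains hA c⁻¹ h, smul_mem_chains hA c⟩

theorem card_dvd_sum_signedChainCount_fixed [Fintype G] (S : Subgroup (ConjAct G)) {A : Finset (Subgroup G)}
    (hA : ∀ (c : ConjAct G), ∀ H ∈ A, c • H ∈ A) :
    (Nat.card S : ℤ) ∣ ∑ s : S, signedChainCount (A.filter fun H => (s : ConjAct G) • H = H) := by
  let F (σ : Finset (Subgroup G)) : ℤ := if σ ∈ chains A then (-1) ^ σ.card else 0
  have hF (s : S) (σ : Finset (Subgroup G)) : F (s • σ) = F σ := by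
    have h_iff : s • σ ∈ chains A ↔ σ ∈ chains A := smul_mem_chains_iff hA (s : ConjAct G)
    simp only [F, h_iff, card_smul_finset]
  convert MulAction.card_dvd_sum_sum_fixed F hF using 2 with s
  rw [signedChainCount, ← filter_chains_smul_eq_self, ← sum_filter]
  congr 1
  ext σ
  simp only [mem_filter, mem_univ, true_and, and_comm]
  rfl

end Conjugation

section OrderDividing

variable {G : Type*} [Group G] [Fintype G] {p k t : ℕ}

variable (G) in
noncomputable def subgroupsOfCardDvd (n : ℕ) : Finset (Subgroup G) :=
  univ.filter fun H => Nat.card H ∣ n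

@[simp]
lemma mem_subgroupsOfCardDvd {n : ℕ} {H : Subgroup G} :
    H ∈ subgroupsOfCardDvd G n ↔ Nat.card H ∣ n := by
  simp [subgroupsOfCardDvd]

lemma isLowerSet_subgroupsOfCardDvd (n : ℕ) :
    IsLowerSet (subgroupsOfCardDvd G n : Set (Subgroup G)) := fun H K hKH hH => by
  simpa using (Subgroup.card_dvd_of_le hKH).trans (mem_subgroupsOfCardDvd.1 hH)

lemma smul_mem_subgroupsOfCardDvd_erase_bot (n : ℕ) (c : ConjAct G) {H : Subgroup G}
    (hH : H ∈ (subgroupsOfCardDvd G n).erase ⊥) : c • H ∈ (subgroupsOfCardDvd G n).erase ⊥ := by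
  simp only [mem_erase, mem_subgroupsOfCardDvd, Subgroup.card_conjAct_smul] at hH ⊢
  exact ⟨fun h => hH.1 (by simpa using congr_arg (c⁻¹ • ·) h), hH.2⟩

lemma card_dvd_pow_mul_iff_ordCompl_dvd (hp : p.Prime) (hcard : Nat.card G = p ^ k * t)
    (hcop : Nat.Coprime p t) (H : Subgroup G) {m : ℕ} :
    Nat.card H ∣ p ^ k * m ↔ ordCompl[p] (Nat.card H) ∣ m :=
  Nat.dvd_pow_mul_iff_ordCompl_dvd hp hcop Nat.card_pos.ne' (hcard ▸ H.card_subgroup_dvd_card)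

lemma card_sup_dvd_pow_mul (hp : p.Prime) (hcard : Nat.card G = p ^ k * t)
    (hcop : Nat.Coprime p t) {y z : Subgroup G} (hz_norm : z ≤ Subgroup.normalizer (y : Set G))
    {d : ℕ} (hy : Nat.card y ∣ p ^ k * d) (hz : Nat.card z ∣ p ^ k) :
    Nat.card ↥(z ⊔ y) ∣ p ^ k * d := by
  have h : Nat.card ↥(z ⊔ y) ∣ p ^ k * (d * p ^ k) :=
    (Subgroup.card_sup_dvd_mul_of_le_normalizer hz_norm).trans
      ((mul_dvd_mul hy hz).trans (by rw [mul_assoc]))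
  rw [card_dvd_pow_mul_iff_ordCompl_dvd hp hcard hcop] at h ⊢
  exact ((Nat.coprime_ordCompl hp Nat.card_pos.ne').pow_left k).symm.dvd_of_dvd_mul_right h

/-- The `g`-invariant members form a cone with apex `⟨g⟩`: `y ⊔ ⟨g⟩` is again `g`-invariant,
and its order still divides `p^k d` since `⟨g⟩` normalizes `y`. -/
lemma signedChainCount_fixed_eq_zero (hp : p.Prime) (hcard : Nat.card G = p ^ k * t)
    (hcop : Nat.Coprime p t) (d : ℕ) {g : G} (hg : g ≠ 1) (hg_order : orderOf g ∣ p ^ k) :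
    signedChainCount (((subgroupsOfCardDvd G (p ^ k * d)).erase ⊥).filter
      fun H => ConjAct.toConjAct g • H = H) = 0 := by
  refine signedChainCount_eq_zero_of_sup_mem (z := Subgroup.zpowers g) ?_ fun y hy => ?_
  · simp only [mem_filter, mem_erase, mem_subgroupsOfCardDvd,
      Subgroup.conjAct_pointwise_smul_iff]
    refine ⟨⟨Subgroup.zpowers_ne_bot.2 hg, ?_⟩, Subgroup.le_normalizer (Subgroup.mem_zpowers g)⟩
    rw [Nat.card_zpowers]
    exact hg_order.trans (dvd_mul_right _ _)
  · simp only [mem_filter, mem_erase, mem_subgroupsOfCardDvd] at hy ⊢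
    obtain ⟨⟨hy_ne, hy_card⟩, hy_fix⟩ := hy
    have hz_norm : Subgroup.zpowers g ≤ Subgroup.normalizer (y : Set G) :=
      Subgroup.zpowers_le.2 (Subgroup.conjAct_pointwise_smul_iff.1 hy_fix)
    refine ⟨⟨fun h => hy_ne (eq_bot_mono le_sup_left h), ?_⟩, ?_⟩
    · rw [sup_comm]
      exact card_sup_dvd_pow_mul hp hcard hcop hz_norm hy_card (Nat.card_zpowers g ▸ hg_order)
    · rw [Subgroup.smul_sup, hy_fix,
        Subgroup.conjAct_pointwise_smul_eq_self (Subgroup.le_normalizer (Subgroup.mem_zpowers g))]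

theorem pow_dvd_signedChainCount (hp : p.Prime) (hcard : Nat.card G = p ^ k * t)
    (hcop : Nat.Coprime p t) (d : ℕ) :
    (p ^ k : ℤ) ∣ signedChainCount ((subgroupsOfCardDvd G (p ^ k * d)).erase ⊥) := by
  have : Fact p.Prime := ⟨hp⟩
  obtain ⟨S, hS⟩ := Sylow.exists_subgroup_card_pow_prime (G := ConjAct G) p (n := k)
    ⟨t, (Nat.card_congr ConjAct.ofConjAct.toEquiv).trans hcard⟩
  have h := card_dvd_sum_signedChainCount_fixed S fun c _ =>
    smul_mem_subgroupsOfCardDvd_erase_bot (p ^ k * d) c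
  rw [Fintype.sum_eq_single 1 fun s hs => ?_, hS] at h
  · simpa using h
  have hs_order : orderOf (ConjAct.ofConjAct (s : ConjAct G)) ∣ p ^ k := by
    rw [MulEquiv.orderOf_eq, Subgroup.orderOf_coe, ← hS]
    exact orderOf_dvd_natCard s
  have h_zero := signedChainCount_fixed_eq_zero hp hcard hcop d (by simpa using hs) hs_order
  rwa [ConjAct.toConjAct_ofConjAct] at h_zero

theorem pow_dvd_sum_subgroupsOfCardDvd (hp : p.Prime) (hcard : Nat.card G = p ^ k * t)
    (hcop : Nat.Coprime p t) (μ : Subgroup G → ℤ) (hbot : μ ⊥ = 1)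
    (hrec : ∀ Q ≠ ⊥, ∑ H ∈ univ.filter (· ≤ Q), μ H = 0) (d : ℕ) :
    (p ^ k : ℤ) ∣ ∑ H ∈ subgroupsOfCardDvd G (p ^ k * d), μ H := by
  rw [sum_eq_signedChainCount_erase_bot μ hbot hrec _ (isLowerSet_subgroupsOfCardDvd _)
    (by simp)]
  exact pow_dvd_signedChainCount hp hcard hcop d

end OrderDividing

/-- Hawkes–Isaacs–Özaydin type divisibility: if `|P| = p^k·t` with `gcd(p,t)=1` and
`t' ∣ t`, then the sum of `μ(P')` over all subgroups `P'` of `P` whose order is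
divisible by `t'` and divides `p^k·t'` is divisible by `p^k`. -/
theorem stmt4 (p : ℕ) (hp : p.Prime) (P : Type*) [Group P] [Finite P]
    (k t t' : ℕ) (hcard : Nat.card P = p ^ k * t) (hcop : Nat.Coprime p t) (ht' : t' ∣ t)
    (μ : Subgroup P → ℤ)
    (hμ_bot : μ ⊥ = 1)
    (hμ_rec : ∀ Q : Subgroup P, Q ≠ ⊥ → ∑ᶠ (P' : Subgroup P) (_ : P' ≤ Q), μ P' = 0) :
    (p ^ k : ℤ) ∣
      ∑ᶠ (P' : Subgroup P) (_ : t' ∣ Nat.card P' ∧ Nat.card P' ∣ p ^ k * t'), μ P' := by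
  have := Fintype.ofFinite P
  have hrec : ∀ Q ≠ ⊥, ∑ H ∈ univ.filter (· ≤ Q), μ H = 0 := fun Q hQ => by
    rw [← hμ_rec Q hQ, finsum_cond_eq_sum_of_cond_iff μ (t := univ.filter (· ≤ Q))
      fun {_} _ => by simp]
  have hcard_dvd (H : Subgroup P) : Nat.card H ∣ p ^ k * t := hcard ▸ H.card_subgroup_dvd_card
  rw [finsum_cond_eq_sum_of_cond_iff μ (t := univ.filter fun H => ordCompl[p] (Nat.card H) = t')
    fun {H} _ => by
      simpa using Nat.dvd_and_dvd_pow_mul_iff_ordCompl_eq hp hcop Nat.card_pos.ne'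
        (hcard_dvd H) (hcop.coprime_dvd_right ht')]
  have ht : t ≠ 0 := fun h => Nat.card_pos.ne' (hcard.trans (by rw [h, mul_zero]))
  refine Nat.dvd_of_forall_dvd_sum_divisors (t := t)
    (f := fun e => ∑ H ∈ univ.filter (fun H : Subgroup P => ordCompl[p] (Nat.card H) = e), μ H) ht
    (fun m hm => ?_) ht'
  have hm₀ : m ≠ 0 := ne_zero_of_dvd_ne_zero ht hm
  rw [sum_fiberwise_eq_sum_filter, filter_congr fun H _ => by
    rw [Nat.mem_divisors, ← card_dvd_pow_mul_iff_ordCompl_dvd hp hcard hcop, and_iff_left hm₀]]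
  exact pow_dvd_sum_subgroupsOfCardDvd hp hcard hcop μ hμ_bot hrec m
end

section
/- Let p be an odd prime, P a finite p-group, and r ∈ Z_p^×. Then Σ_{P' ⊆ P} μ(P')·r^{[P:P']} ≡ 0 (mod |P|·Z_p). -/
open MulAction Finset

section Action

variable {G : Type*} [Group G] {β : Type*}

/-- Right-translation action of `G` on functions `G → β`. -/
private instance fnSMul : SMul G (G → β) := ⟨fun g f x => f (x * g)⟩

private lemma fnSMul_def (g : G) (f : G → β) (x : G) : (g • f) x = f (x * g) := rfl

private instance fnAct : MulAction G (G → β) where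
  one_smul f := funext fun x => by rw [fnSMul_def, mul_one]
  mul_smul g h f := funext fun x => by
    rw [fnSMul_def, fnSMul_def, fnSMul_def, mul_assoc]

/-- Functions whose stabilizer contains `H` are functions on `G ⧸ H`. -/
private noncomputable def invEquiv (H : Subgroup G) :
    {f : G → β // H ≤ stabilizer G f} ≃ (G ⧸ H → β) where
  toFun f := Quotient.lift f.1 (by
    intro a b hab
    have h : a⁻¹ * b ∈ H := QuotientGroup.leftRel_apply.mp hab
    have := congrFun (f.2 h) a
    rw [fnSMul_def] at this
    simpa [mul_assoc] using this.symm)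
  invFun φ := ⟨fun x => φ (QuotientGroup.mk x), by
    intro h hh
    funext x
    rw [fnSMul_def]
    simp [QuotientGroup.mk_mul_of_mem x hh]⟩
  left_inv f := by ext x; rfl
  right_inv φ := by
    funext q
    induction q using Quotient.inductionOn
    rfl

end Action

section Counting

variable {G : Type*} [Group G] [Finite G]

private lemma card_inv (H : Subgroup G) (t : ℕ) :
    Nat.card {f : G → Fin t // H ≤ stabilizer G f} = t ^ H.index := by
  rw [Nat.card_congr (invEquiv H), Nat.card_fun, Nat.card_eq_fintype_card (α := Fin t),
    Fintype.card_fin, Subgroup.index]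

private lemma stab_eq_bot_smul (g : G) (f : G → Fin t) (h : stabilizer G f = ⊥) :
    stabilizer G (g • f) = ⊥ := by
  rw [stabilizer_smul_eq_stabilizer_map_conj, h, Subgroup.map_bot]

/-- The set of functions with trivial stabilizer has cardinality divisible by `|G|`. -/
private lemma card_free_dvd (t : ℕ) :
    Nat.card G ∣ Nat.card {f : G → Fin t // stabilizer G f = ⊥} := by
  classical
  set X := {f : G → Fin t // stabilizer G f = ⊥} with hX
  letI : SMul G X := ⟨fun g x => ⟨g • x.1, stab_eq_bot_smul g x.1 x.2⟩⟩
  have smul_def : ∀ (g : G) (x : X), (g • x).1 = g • x.1 := fun _ _ => rfl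
  letI : MulAction G X :=
    { one_smul := fun x => Subtype.ext (by rw [smul_def, one_smul])
      mul_smul := fun g h x => Subtype.ext (by simp only [smul_def, mul_smul]) }
  have hstab : ∀ x : X, stabilizer G x = ⊥ := by
    intro x
    rw [← x.2]
    ext g
    simp only [mem_stabilizer_iff]
    constructor
    · intro h; exact congrArg Subtype.val h
    · intro h; exact Subtype.ext h
  have horb : ∀ x : X, Nat.card (orbit G x) = Nat.card G := by
    intro x
    rw [Nat.card_congr (orbitEquivQuotientStabilizer G x), hstab x,
      Nat.card_congr (QuotientGroup.quotientBot (G := G)).toEquiv]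
  letI : Fintype X := Fintype.ofFinite X
  letI : Fintype (orbitRel.Quotient G X) := Fintype.ofFinite _
  letI : ∀ ω : orbitRel.Quotient G X, Fintype (orbit G (Quotient.out ω)) :=
    fun ω => Fintype.ofFinite _
  have hcard : Nat.card X = ∑ ω : orbitRel.Quotient G X,
      Fintype.card (orbit G (Quotient.out ω)) := by
    rw [Nat.card_congr (selfEquivSigmaOrbits G X), Nat.card_eq_fintype_card,
      Fintype.card_sigma]
  rw [hcard]
  refine Finset.dvd_sum fun ω _ => ?_
  rw [← Nat.card_eq_fintype_card, horb]

end Counting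

section Key

variable {G : Type*} [Group G] [Finite G]

/-- Key integer congruence: for any finite group `G` and natural `t`,
`∑_H μ(H) t^[G:H]` counts functions `G → Fin t` with trivial stabilizer,
hence is divisible by `|G|`. -/
private lemma key_count (μ : Subgroup G → ℤ)
    (hμ_bot : μ ⊥ = 1)
    (hμ_rec : ∀ Q : Subgroup G, Q ≠ ⊥ → ∑ᶠ (H : Subgroup G) (_ : H ≤ Q), μ H = 0)
    (t : ℕ) :
    (Nat.card G : ℤ) ∣ ∑ᶠ H : Subgroup G, μ H * (t : ℤ) ^ H.index := by
  classical
  letI : Fintype G := Fintype.ofFinite G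
  letI : Fintype (Subgroup G) := Fintype.ofFinite _
  -- combined Möbius recursion in `Finset` form
  have hμ : ∀ Q : Subgroup G,
      (∑ H ∈ Finset.univ.filter (· ≤ Q), μ H) = if Q = ⊥ then 1 else 0 := by
    intro Q
    by_cases hQ : Q = ⊥
    · subst hQ
      have hfilt : Finset.univ.filter (· ≤ (⊥ : Subgroup G)) = {⊥} := by
        ext H; simp [le_bot_iff]
      rw [hfilt, if_pos rfl, Finset.sum_singleton, hμ_bot]
    · rw [if_neg hQ, ← hμ_rec Q hQ]
      exact (finsum_cond_eq_sum_of_cond_iff μ (fun {H} => by simp)).symm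
  rw [finsum_eq_sum_of_fintype]
  -- count functions with stabilizer containing H
  have hterm : ∀ H : Subgroup G,
      μ H * (t : ℤ) ^ H.index =
        ∑ f : G → Fin t, (if H ≤ stabilizer G f then μ H else 0) := by
    intro H
    rw [Finset.sum_ite, Finset.sum_const, Finset.sum_const_zero, add_zero, nsmul_eq_mul]
    have hc : (Finset.univ.filter fun f : G → Fin t => H ≤ stabilizer G f).card
        = t ^ H.index := by
      rw [← card_inv H t, Nat.card_eq_fintype_card, Fintype.card_subtype]
    rw [hc]
    push_cast
    ring
  have hsum : (∑ H : Subgroup G, μ H * (t : ℤ) ^ H.index)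
      = ((Finset.univ.filter fun f : G → Fin t => stabilizer G f = ⊥).card : ℤ) := by
    calc ∑ H : Subgroup G, μ H * (t : ℤ) ^ H.index
        = ∑ H : Subgroup G, ∑ f : G → Fin t,
            (if H ≤ stabilizer G f then μ H else 0) := Finset.sum_congr rfl fun H _ => hterm H
      _ = ∑ f : G → Fin t, ∑ H : Subgroup G,
            (if H ≤ stabilizer G f then μ H else 0) := Finset.sum_comm
      _ = ∑ f : G → Fin t, (if stabilizer G f = ⊥ then 1 else 0) := by
          refine Finset.sum_congr rfl fun f _ => ?_
          rw [← hμ (stabilizer G f), Finset.sum_filter]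
      _ = ((Finset.univ.filter fun f : G → Fin t => stabilizer G f = ⊥).card : ℤ) := by
          rw [Finset.sum_boole]
  rw [hsum]
  have : (Finset.univ.filter fun f : G → Fin t => stabilizer G f = ⊥).card
      = Nat.card {f : G → Fin t // stabilizer G f = ⊥} := by
    rw [Nat.card_eq_fintype_card, Fintype.card_subtype]
  rw [this]
  exact_mod_cast Int.natCast_dvd_natCast.mpr (card_free_dvd t)

end Key

/-- Möbius–Wall congruence for a finite `p`-group `P` (`p` odd): for `r ∈ ℤ_p^×`,
`∑_{P' ≤ P} μ(P')·r^[P:P'] ≡ 0 (mod |P|·ℤ_p)`. -/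
theorem stmt12 (p : ℕ) [Fact p.Prime] (hodd : Odd p) (P : Type*) [Group P] [Finite P]
    (hP : IsPGroup p P)
    (μ : Subgroup P → ℤ)
    (hμ_bot : μ ⊥ = 1)
    (hμ_rec : ∀ Q : Subgroup P, Q ≠ ⊥ → ∑ᶠ (P' : Subgroup P) (_ : P' ≤ Q), μ P' = 0)
    (r : ℤ_[p]ˣ) :
    (Nat.card P : ℤ_[p]) ∣
      ∑ᶠ P' : Subgroup P, (μ P' : ℤ_[p]) * (r : ℤ_[p]) ^ P'.index := by
  classical
  obtain ⟨n, hn⟩ := (IsPGroup.iff_card (p := p)).mp hP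
  haveI : NeZero (p ^ n) := ⟨pow_ne_zero n (Fact.out (p := p.Prime)).ne_zero⟩
  set R : ℤ_[p] := (r : ℤ_[p]) with hR
  set t : ℕ := (PadicInt.toZModPow n R).val with ht
  -- `R ≡ t (mod p^n)`
  have hdvd_rt : (Nat.card P : ℤ_[p]) ∣ R - (t : ℤ_[p]) := by
    have hker : PadicInt.toZModPow n (R - (t : ℤ_[p])) = 0 := by
      rw [map_sub, map_natCast, ht, ZMod.natCast_val, ZMod.cast_id, sub_self]
    have hmem : R - (t : ℤ_[p]) ∈ Ideal.span {(p : ℤ_[p]) ^ n} := by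
      rw [← PadicInt.ker_toZModPow n]
      exact RingHom.mem_ker.mpr hker
    rw [Ideal.mem_span_singleton] at hmem
    rw [hn]
    push_cast
    exact hmem
  -- the integer congruence, cast to `ℤ_[p]`
  have hZ := key_count μ hμ_bot hμ_rec t
  letI : Fintype (Subgroup P) := Fintype.ofFinite _
  rw [finsum_eq_sum_of_fintype] at hZ ⊢
  have hZt : (Nat.card P : ℤ_[p]) ∣
      ∑ H : Subgroup P, (μ H : ℤ_[p]) * (t : ℤ_[p]) ^ H.index := by
    have h2 := map_dvd (Int.castRingHom ℤ_[p]) hZ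
    simp only [Int.coe_castRingHom] at h2
    push_cast at h2
    exact h2
  have hdiff : (Nat.card P : ℤ_[p]) ∣
      (∑ H : Subgroup P, (μ H : ℤ_[p]) * R ^ H.index)
        - ∑ H : Subgroup P, (μ H : ℤ_[p]) * (t : ℤ_[p]) ^ H.index := by
    rw [← Finset.sum_sub_distrib]
    refine Finset.dvd_sum fun H _ => ?_
    rw [← mul_sub]
    exact ((hdvd_rt.trans (sub_dvd_pow_sub_pow R _ H.index)).mul_left _)
  have := dvd_add hdiff hZt
  rwa [sub_add_cancel] at this
end
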